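/- Let G be a finite graph with vertex set V and c components, and let e be a non-loop edge of G. The link of the vertex e in the forest complex F(G) is isomorphic to the forest complex F(G/e) of the graph obtained by contracting e, and dim F(G/e) = dim F(G) − 1. -/

import Mathlib

noncomputable section
open Classical
set_option linter.unusedSectionVars false
set_option maxHeartbeats 1000000

/-- A face of the forest complex of `G`: a nonempty circle-free set of edges of `G`. -/
def ForestFace {V : Type*} (G : SimpleGraph V) (σ : Finset (Sym2 V)) : Prop :=
  σ.Nonempty ∧ (σ : Set (Sym2 V)) ⊆ G.edgeSet ∧
    (SimpleGraph.fromEdgeSet (σ : Set (Sym2 V))).IsAcyclic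

/-- The retraction map contracting the edge `s(u,v)`: it sends `v` to `u`. -/
def contractMap {V : Type*} [DecidableEq V] (u v : V) : V → V :=
  fun x => if x = v then u else x

/-- The set of vertices (of the contracted graph `G/e`, `e = s(u,v)`) touched by a
set `τ` of edges of `G`, after redirecting `v` to `u`. -/
def contractVerts {V : Type*} [Fintype V] [DecidableEq V] (u v : V)
    (τ : Finset (Sym2 V)) : Finset V :=
  Finset.univ.filter fun w => ∃ f ∈ τ, w ∈ Sym2.map (contractMap u v) f

/-- A face of the forest complex `F(G/e)` of the contraction of `G` along the edge
`e = s(u,v)` (a multigraph in general): a nonempty set of edges of `G` other than `e`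
which is circle-free after contracting `e`.  Circle-freeness in a multigraph is
expressed by the condition that every nonempty subset of edges touches strictly more
vertices than it has edges. -/
def ContractedForestFace {V : Type*} [Fintype V] [DecidableEq V] (G : SimpleGraph V)
    (u v : V) (σ : Finset (Sym2 V)) : Prop :=
  σ.Nonempty ∧ (σ : Set (Sym2 V)) ⊆ G.edgeSet ∧ s(u, v) ∉ σ ∧
    ∀ τ ⊆ σ, τ.Nonempty → τ.card + 1 ≤ (contractVerts u v τ).card

namespace FCAux

open SimpleGraph Finset Walk

variable {V : Type*} [Fintype V] [DecidableEq V]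

open SimpleGraph Finset Walk

variable {V : Type*} [Fintype V] [DecidableEq V]

def tverts (τ : Finset (Sym2 V)) : Finset V :=
  Finset.univ.filter fun w => ∃ f ∈ τ, w ∈ f

lemma mem_tverts {τ : Finset (Sym2 V)} {w : V} : w ∈ tverts τ ↔ ∃ f ∈ τ, w ∈ f := by
  simp [tverts]

lemma tverts_mono {σ τ : Finset (Sym2 V)} (h : σ ⊆ τ) : tverts σ ⊆ tverts τ := by
  intro w hw
  rw [mem_tverts] at hw ⊢
  obtain ⟨f, hf, hwf⟩ := hw
  exact ⟨f, h hf, hwf⟩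

lemma acyclic_mono {σ τ : Finset (Sym2 V)} (h : σ ⊆ τ)
    (hac : (SimpleGraph.fromEdgeSet (τ : Set (Sym2 V))).IsAcyclic) :
    (SimpleGraph.fromEdgeSet (σ : Set (Sym2 V))).IsAcyclic := by
  intro u c hc
  have hle : SimpleGraph.fromEdgeSet (σ : Set (Sym2 V)) ≤
      SimpleGraph.fromEdgeSet (τ : Set (Sym2 V)) :=
    SimpleGraph.fromEdgeSet_mono (by exact_mod_cast h)
  exact hac (c.mapLe hle) (hc.mapLe _)

lemma path_head_edge {H : SimpleGraph V} {b a : V} {p : H.Walk b a} (hp : p.IsPath)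
    {g : Sym2 V} (hg : g ∈ p.edges) (hb : b ∈ g) :
    ∃ (y : V) (h : H.Adj b y) (q : H.Walk y a), p = Walk.cons h q ∧ g = s(b, y) := by
  cases p with
  | nil => simp at hg
  | cons h q =>
    refine ⟨_, h, q, rfl, ?_⟩
    rw [Walk.edges_cons] at hg
    rcases List.mem_cons.mp hg with hg | hg
    · exact hg
    · exfalso
      obtain ⟨z, rfl⟩ := Sym2.mem_iff_exists.mp hb
      have := Walk.fst_mem_support_of_mem_edges q hg
      rw [Walk.cons_isPath_iff] at hp
      exact hp.2 this

lemma sym2_exists_rep (f : Sym2 V) : ∃ x y, f = s(x, y) := by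
  induction f using Sym2.ind with
  | _ x y => exact ⟨x, y, rfl⟩

lemma exists_leaf (τ : Finset (Sym2 V)) (hne : τ.Nonempty)
    (hd : ∀ f ∈ τ, ¬ f.IsDiag)
    (hac : (SimpleGraph.fromEdgeSet (τ : Set (Sym2 V))).IsAcyclic) :
    ∃ (b : V) (f : Sym2 V), f ∈ τ ∧ b ∈ f ∧ ∀ g ∈ τ, b ∈ g → g = f := by
  set H := SimpleGraph.fromEdgeSet (τ : Set (Sym2 V)) with hH
  have hadj : ∀ {x y : V}, s(x, y) ∈ τ → H.Adj x y := by
    intro x y hxy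
    rw [hH, SimpleGraph.fromEdgeSet_adj]
    refine ⟨by exact_mod_cast hxy, ?_⟩
    intro h; exact hd _ hxy (by simp [h])
  obtain ⟨f0, hf0⟩ := hne
  obtain ⟨x0, y0, rfl⟩ := sym2_exists_rep f0
  let L : Set ℕ := {n | ∃ (a b : V) (p : H.Walk a b), p.IsPath ∧ p.length = n}
  let S : Finset ℕ := (Finset.range (Fintype.card V + 1)).filter (· ∈ L)
  have hmemS : ∀ {n}, n ∈ L → n ∈ S := by
    intro n hn
    obtain ⟨a, b, p, hp, rfl⟩ := hn
    exact Finset.mem_filter.mpr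
      ⟨Finset.mem_range.mpr (by have := hp.length_lt; omega), ⟨a, b, p, hp, rfl⟩⟩
  have hadj0 := hadj hf0
  have h1 : (1 : ℕ) ∈ S := by
    refine hmemS ⟨x0, y0, Walk.cons hadj0 Walk.nil, ?_, by simp⟩
    simp [Walk.cons_isPath_iff, hadj0.ne]
  have hSne : S.Nonempty := ⟨1, h1⟩
  set N := S.max' hSne with hN
  have hNL : N ∈ L := (Finset.mem_filter.mp (S.max'_mem hSne)).2
  obtain ⟨a, b, p, hp, hplen⟩ := hNL
  have hmax : ∀ n ∈ L, n ≤ N := fun n hn => S.le_max' n (hmemS hn)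
  have h1N : 1 ≤ N := S.le_max' 1 h1
  have hpr : p.reverse.IsPath := hp.reverse
  have hprlen : p.reverse.length = N := by simp [hplen]
  have hnn : ¬ p.reverse.Nil := by rw [Walk.nil_iff_length_eq]; omega
  obtain ⟨y, hby, q, hq⟩ := Walk.not_nil_iff.mp hnn
  have hbyτ : s(b, y) ∈ τ := by
    have := hby; rw [hH, SimpleGraph.fromEdgeSet_adj] at this; exact_mod_cast this.1
  refine ⟨b, s(b, y), hbyτ, Sym2.mem_mk_left _ _, ?_⟩
  intro g hg hbg
  obtain ⟨z, rfl⟩ := Sym2.mem_iff_exists.mp hbg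
  have hzb : z ≠ b := fun h => hd _ hg (by simp [h])
  have hbz : H.Adj b z := hadj hg
  by_cases hzy : z = y
  · subst hzy; rfl
  exfalso
  by_cases hzs : z ∈ p.reverse.support
  · have htU : (p.reverse.takeUntil z hzs).IsPath := hpr.takeUntil hzs
    have hcyc := hac (Walk.cons hbz.symm (p.reverse.takeUntil z hzs))
    rw [Walk.cons_isCycle_iff] at hcyc
    have hmem : s(z, b) ∈ (p.reverse.takeUntil z hzs).edges := by
      by_contra hmem
      exact hcyc ⟨htU, hmem⟩
    have hmem' : s(z, b) ∈ p.reverse.edges := Walk.edges_takeUntil_subset _ hzs hmem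
    obtain ⟨y', h', q', heq, hedge⟩ := path_head_edge hpr hmem' (by simp)
    rw [hq] at heq
    have hyy' : y = y' := by
      have := congrArg (fun w => w.getVert 1) heq
      simpa using this
    have hzy' : z = y' := by
      rw [Sym2.eq_swap] at hedge
      exact (Sym2.congr_right.mp hedge)
    exact hzy (hzy'.trans hyy'.symm)
  · have hext : (Walk.cons hbz.symm p.reverse).IsPath := by
      rw [Walk.cons_isPath_iff]; exact ⟨hpr, hzs⟩
    have hL : N + 1 ∈ L := ⟨z, a, _, hext, by simp [hprlen]⟩
    have := hmax _ hL; omega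

lemma lemA : ∀ (n : ℕ) (τ : Finset (Sym2 V)), τ.card = n → τ.Nonempty →
    (∀ f ∈ τ, ¬ f.IsDiag) → (SimpleGraph.fromEdgeSet (τ : Set (Sym2 V))).IsAcyclic →
    τ.card + 1 ≤ (tverts τ).card := by
  intro n
  induction n with
  | zero =>
    intro τ h hne _ _
    rw [Finset.card_eq_zero] at h
    subst h
    exact absurd hne (by simp)
  | succ n ih =>
    intro τ hcard hne hd hac
    obtain ⟨b, f, hf, hbf, huniq⟩ := exists_leaf τ hne hd hac
    obtain ⟨c, rfl⟩ := Sym2.mem_iff_exists.mp hbf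
    have hbc : b ≠ c := fun h => hd _ hf (by simp [h])
    set τ' := τ.erase s(b, c) with hτ'
    have hsub : τ' ⊆ τ := Finset.erase_subset _ _
    have hbm : b ∈ tverts τ := mem_tverts.mpr ⟨_, hf, by simp⟩
    have hcm : c ∈ tverts τ := mem_tverts.mpr ⟨_, hf, by simp⟩
    have hbn : b ∉ tverts τ' := by
      rw [mem_tverts]
      rintro ⟨g, hg, hbg⟩
      have hgf := huniq g (hsub hg) hbg
      rw [hgf] at hg
      exact (Finset.notMem_erase _ _) hg
    rcases τ'.eq_empty_or_nonempty with h0 | h0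
    · have hc1 : τ.card = 1 := by
        have := Finset.card_erase_of_mem hf
        rw [← hτ', h0] at this
        simp at this
        omega
      have h2 : ({b, c} : Finset V) ⊆ tverts τ := by
        intro w hw
        rcases Finset.mem_insert.mp hw with rfl | hw
        · exact hbm
        · rw [Finset.mem_singleton] at hw; subst hw; exact hcm
      have h3 := Finset.card_le_card h2
      rw [Finset.card_insert_of_notMem (by simp [hbc]), Finset.card_singleton] at h3
      omega
    · have hcard' : τ'.card = n := by
        rw [hτ', Finset.card_erase_of_mem hf]; omega
      have ihr := ih τ' hcard' h0 (fun g hg => hd g (hsub hg)) (acyclic_mono hsub hac)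
      have hins : insert b (tverts τ') ⊆ tverts τ := by
        intro w hw
        rcases Finset.mem_insert.mp hw with rfl | hw
        · exact hbm
        · exact tverts_mono hsub hw
      have h3 := Finset.card_le_card hins
      rw [Finset.card_insert_of_notMem hbn] at h3
      omega




lemma comp_eq_of_mem {G : SimpleGraph V} {f : Sym2 V} (hf : f ∈ G.edgeSet) {w x : V}
    (hw : w ∈ f) (hx : x ∈ f) :
    G.connectedComponentMk w = G.connectedComponentMk x := by
  revert hf hw hx
  induction f using Sym2.ind with
  | _ a b =>
    intro hf hw hx
    rw [SimpleGraph.mem_edgeSet] at hf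
    rcases Sym2.mem_iff.mp hw with rfl | rfl <;> rcases Sym2.mem_iff.mp hx with rfl | rfl
    · rfl
    · exact SimpleGraph.ConnectedComponent.sound hf.reachable
    · exact SimpleGraph.ConnectedComponent.sound hf.symm.reachable
    · rfl

lemma sym2_exists_rep' (f : Sym2 V) : ∃ x y, f = s(x, y) := by
  induction f using Sym2.ind with
  | _ x y => exact ⟨x, y, rfl⟩

lemma sym2_exists_mem (f : Sym2 V) : ∃ x, x ∈ f := by
  induction f using Sym2.ind with
  | _ x y => exact ⟨x, Sym2.mem_mk_left _ _⟩

/-- an arbitrary member of a Sym2 -/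
def epick (f : Sym2 V) : V := (sym2_exists_mem f).choose

lemma epick_mem (f : Sym2 V) : epick f ∈ f := (sym2_exists_mem f).choose_spec

lemma lemB (G : SimpleGraph V) (τ : Finset (Sym2 V)) (hsub : (τ : Set (Sym2 V)) ⊆ G.edgeSet)
    (hac : (SimpleGraph.fromEdgeSet (τ : Set (Sym2 V))).IsAcyclic) :
    τ.card + Nat.card G.ConnectedComponent ≤ Fintype.card V := by
  classical
  haveI : Fintype G.ConnectedComponent := Fintype.ofFinite _
  set compOf : Sym2 V → G.ConnectedComponent := fun f => G.connectedComponentMk (epick f)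
    with hcompOf
  have hτ : τ.card = ∑ c : G.ConnectedComponent,
      (τ.filter fun f => compOf f = c).card :=
    Finset.card_eq_sum_card_fiberwise (fun f _ => Finset.mem_univ _)
  have hV : Fintype.card V = ∑ c : G.ConnectedComponent,
      (Finset.univ.filter fun w => G.connectedComponentMk w = c).card := by
    rw [← Finset.card_univ]
    exact Finset.card_eq_sum_card_fiberwise (fun w _ => Finset.mem_univ _)
  have key : ∀ c : G.ConnectedComponent,
      (τ.filter fun f => compOf f = c).card + 1 ≤
        (Finset.univ.filter fun w => G.connectedComponentMk w = c).card := by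
    intro c
    obtain ⟨w0, hw0⟩ := c.exists_rep
    have hc0 : G.connectedComponentMk w0 = c := hw0
    subst hc0
    set τc := τ.filter fun f => compOf f = G.connectedComponentMk w0 with hτc
    have hτcsub : τc ⊆ τ := Finset.filter_subset _ _
    rcases τc.eq_empty_or_nonempty with h0 | h0
    · rw [h0]
      simp only [Finset.card_empty, zero_add]
      rw [Nat.one_le_iff_ne_zero, ← Nat.pos_iff_ne_zero, Finset.card_pos]
      exact ⟨w0, Finset.mem_filter.mpr ⟨Finset.mem_univ _, rfl⟩⟩
    · have hd : ∀ f ∈ τc, ¬ f.IsDiag := fun f hf =>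
        G.not_isDiag_of_mem_edgeSet (hsub (hτcsub hf))
      have h1 := lemA τc.card τc rfl h0 hd (acyclic_mono hτcsub hac)
      refine h1.trans (Finset.card_le_card ?_)
      intro w hw
      rw [mem_tverts] at hw
      obtain ⟨f, hf, hwf⟩ := hw
      have hfc : compOf f = G.connectedComponentMk w0 := (Finset.mem_filter.mp hf).2
      rw [Finset.mem_filter]
      refine ⟨Finset.mem_univ _, ?_⟩
      rw [← hfc, hcompOf]
      exact comp_eq_of_mem (hsub (hτcsub hf)) hwf (epick_mem f)
  calc τ.card + Nat.card G.ConnectedComponent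
      = ∑ c : G.ConnectedComponent, ((τ.filter fun f => compOf f = c).card + 1) := by
        rw [Finset.sum_add_distrib, ← hτ]
        simp [Nat.card_eq_fintype_card, Finset.card_univ]
    _ ≤ ∑ c : G.ConnectedComponent,
        (Finset.univ.filter fun w => G.connectedComponentMk w = c).card :=
        Finset.sum_le_sum fun c _ => key c
    _ = Fintype.card V := hV.symm




lemma contractVerts_eq (u v : V) (τ : Finset (Sym2 V)) :
    contractVerts u v τ = (tverts τ).image (contractMap u v) := by
  ext w
  simp only [contractVerts, Finset.mem_filter, Finset.mem_univ, true_and, Finset.mem_image,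
    mem_tverts, Sym2.mem_map]
  constructor
  · rintro ⟨f, hf, a, ha, rfl⟩
    exact ⟨a, ⟨f, hf, ha⟩, rfl⟩
  · rintro ⟨a, ⟨f, hf, ha⟩, rfl⟩
    exact ⟨f, hf, a, ha, rfl⟩

lemma mem_support_of_mem_edge {H : SimpleGraph V} {x y : V} {p : H.Walk x y}
    {g : Sym2 V} (hg : g ∈ p.edges) {w : V} (hw : w ∈ g) : w ∈ p.support := by
  obtain ⟨z, rfl⟩ := Sym2.mem_iff_exists.mp hw
  exact Walk.fst_mem_support_of_mem_edges p hg

/-- every support vertex of a cycle lies in two distinct edges of the cycle -/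
lemma cycle_two_edges {H : SimpleGraph V} {x w : V} {c : H.Walk x x} (hc : c.IsCycle)
    (hw : w ∈ c.support) :
    ∃ f g, f ∈ c.edges ∧ g ∈ c.edges ∧ f ≠ g ∧ w ∈ f ∧ w ∈ g := by
  set c' := c.rotate w hw with hc'def
  have hc'c : c'.IsCycle := hc.rotate hw
  have hrot : c'.edges ~r c.edges := Walk.rotate_edges c w hw
  have hmemiff : ∀ e, e ∈ c'.edges → e ∈ c.edges := fun e he => (hrot.perm.mem_iff).mp he
  obtain ⟨y, hy, q, hq⟩ := Walk.not_nil_iff.mp hc'c.not_nil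
  have hqnn : ¬ q.Nil := Walk.not_nil_of_ne hy.ne'
  obtain ⟨z, hz, q2, hq2⟩ := Walk.not_nil_iff.mp (by
    rw [Walk.nil_iff_length_eq, Walk.length_reverse]
    rw [Walk.nil_iff_length_eq] at hqnn
    exact hqnn : ¬ q.reverse.Nil)
  refine ⟨s(w, y), s(w, z), ?_, ?_, ?_, by simp, by simp⟩
  · apply hmemiff
    rw [hq, Walk.edges_cons]
    exact List.mem_cons_self
  · apply hmemiff
    have : s(w, z) ∈ q.reverse.edges := by
      rw [hq2, Walk.edges_cons]
      exact List.mem_cons_self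
    rw [Walk.edges_reverse, List.mem_reverse] at this
    rw [hq, Walk.edges_cons]
    exact List.mem_cons_of_mem _ this
  · -- distinct: edges of c' nodup, s(w,y) is head, s(w,z) ∈ q.edges
    have hnodup : c'.edges.Nodup := hc'c.isTrail.edges_nodup
    rw [hq, Walk.edges_cons, List.nodup_cons] at hnodup
    intro hfg
    apply hnodup.1
    rw [hfg]
    have : s(w, z) ∈ q.reverse.edges := by
      rw [hq2, Walk.edges_cons]
      exact List.mem_cons_self
    rwa [Walk.edges_reverse, List.mem_reverse] at this

lemma bridge (G : SimpleGraph V) {u v : V} (huv : G.Adj u v) (σ : Finset (Sym2 V))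
    (he : s(u, v) ∉ σ) :
    (ForestFace G (insert s(u, v) σ) ∧ σ.Nonempty) ↔ ContractedForestFace G u v σ := by
  constructor
  · rintro ⟨⟨-, hsubE, hac⟩, hσne⟩
    have hσsub : (σ : Set (Sym2 V)) ⊆ G.edgeSet := fun f hf =>
      hsubE (by exact_mod_cast Finset.mem_insert_of_mem (by exact_mod_cast hf))
    refine ⟨hσne, hσsub, he, ?_⟩
    intro τ hτσ hτne
    rw [contractVerts_eq]
    have hτsub' : τ ⊆ insert s(u, v) σ := hτσ.trans (Finset.subset_insert _ _)
    have hd : ∀ f ∈ τ, ¬ f.IsDiag := fun f hf =>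
      G.not_isDiag_of_mem_edgeSet (hσsub (hτσ hf))
    have hacτ := acyclic_mono hτsub' hac
    by_cases hb : u ∈ tverts τ ∧ v ∈ tverts τ
    · have hτ' : (insert s(u, v) τ).card = τ.card + 1 :=
        Finset.card_insert_of_notMem (fun h => he (hτσ h))
      have hdd : ∀ f ∈ insert s(u, v) τ, ¬ f.IsDiag := by
        intro f hf
        rcases Finset.mem_insert.mp hf with rfl | hf
        · simp [huv.ne]
        · exact hd f hf
      have hsub2 : insert s(u, v) τ ⊆ insert s(u, v) σ := Finset.insert_subset_insert _ hτσ
      have hA := lemA _ _ rfl (Finset.insert_nonempty _ _) hdd (acyclic_mono hsub2 hac)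
      have htv : tverts (insert s(u, v) τ) = tverts τ := by
        apply Finset.Subset.antisymm
        · intro w hw
          rw [mem_tverts] at hw
          obtain ⟨f, hf, hwf⟩ := hw
          rcases Finset.mem_insert.mp hf with rfl | hf
          · rcases Sym2.mem_iff.mp hwf with rfl | rfl
            · exact hb.1
            · exact hb.2
          · exact mem_tverts.mpr ⟨f, hf, hwf⟩
        · exact tverts_mono (Finset.subset_insert _ _)
      rw [htv, hτ'] at hA
      have himg : (tverts τ).card - 1 ≤ ((tverts τ).image (contractMap u v)).card := by
        have h5 : ((tverts τ).erase v).card ≤ ((tverts τ).image (contractMap u v)).card := by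
          apply Finset.card_le_card_of_injOn (contractMap u v)
          · intro x hx
            exact Finset.mem_image_of_mem _ (Finset.mem_of_mem_erase hx)
          · intro x hx y hy hxy
            have hx' := Finset.ne_of_mem_erase hx
            have hy' := Finset.ne_of_mem_erase hy
            simpa [contractMap, hx', hy'] using hxy
        rwa [Finset.card_erase_of_mem hb.2] at h5
      omega
    · have hA := lemA _ _ rfl hτne hd hacτ
      have hinj : Set.InjOn (contractMap u v) (tverts τ) := by
        intro x hx y hy hxy
        by_cases hxv : x = v <;> by_cases hyv : y = v
        · rw [hxv, hyv]
        · exfalso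
          rw [show contractMap u v x = u by rw [hxv]; exact if_pos rfl,
            show contractMap u v y = y from if_neg hyv] at hxy
          exact hb ⟨by rwa [← hxy] at hy, by rwa [hxv] at hx⟩
        · exfalso
          rw [show contractMap u v y = u by rw [hyv]; exact if_pos rfl,
            show contractMap u v x = x from if_neg hxv] at hxy
          exact hb ⟨by rwa [hxy] at hx, by rwa [hyv] at hy⟩
        · simpa [contractMap, hxv, hyv] using hxy
      rw [Finset.card_image_of_injOn hinj]
      exact hA
  · rintro ⟨hσne, hσsub, -, hcount⟩
    refine ⟨⟨Finset.insert_nonempty _ _, ?_, ?_⟩, hσne⟩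
    · intro f hf
      rcases Finset.mem_insert.mp (by exact_mod_cast hf) with rfl | hf2
      · exact huv
      · exact hσsub (by exact_mod_cast hf2)
    · intro w c hc
      set ρ : Finset (Sym2 V) := c.edges.toFinset with hρ
      have hρsub : ∀ g ∈ ρ, g ∈ insert s(u, v) σ := by
        intro g hg
        rw [hρ, List.mem_toFinset] at hg
        have h6 := Walk.edges_subset_edgeSet c hg
        rw [SimpleGraph.edgeSet_fromEdgeSet] at h6
        have := h6.1
        simpa using this
      have hρcard : ρ.card = c.length := by
        rw [hρ, List.toFinset_card_of_nodup hc.isTrail.edges_nodup, Walk.length_edges]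
      have hlen := hc.three_le_length
      have hsupcard : c.support.toFinset.card ≤ c.length := by
        obtain ⟨y, hadj, q, hq⟩ := Walk.not_nil_iff.mp hc.not_nil
        have hse : c.support.toFinset = q.support.toFinset := by
          rw [hq, Walk.support_cons, List.toFinset_cons]
          exact Finset.insert_eq_self.mpr (by
            rw [List.mem_toFinset]; exact Walk.end_mem_support q)
        rw [hse]
        calc q.support.toFinset.card ≤ q.support.length := List.toFinset_card_le _
          _ = q.length + 1 := Walk.length_support q
          _ = c.length := by rw [hq, Walk.length_cons]
      have htv : tverts ρ ⊆ c.support.toFinset := by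
        intro x hx
        rw [mem_tverts] at hx
        obtain ⟨f, hf, hxf⟩ := hx
        rw [List.mem_toFinset]
        rw [hρ, List.mem_toFinset] at hf
        exact mem_support_of_mem_edge hf hxf
      by_cases heρ : s(u, v) ∈ ρ
      · set τ := ρ.erase s(u, v) with hτ
        have hτσ : τ ⊆ σ := by
          intro g hg
          have hg1 := Finset.mem_of_mem_erase hg
          have hg2 := Finset.ne_of_mem_erase hg
          exact (Finset.mem_insert.mp (hρsub g hg1)).resolve_left hg2
        have hτcard : τ.card = ρ.card - 1 := Finset.card_erase_of_mem heρ
        have key : ∀ x, x ∈ s(u, v) → x ∈ tverts τ := by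
          intro x hxe
          have hxs : x ∈ c.support := by
            apply mem_support_of_mem_edge _ hxe
            rwa [hρ, List.mem_toFinset] at heρ
          obtain ⟨f, g, hf, hg, hfg, hxf, hxg⟩ := cycle_two_edges hc hxs
          by_cases hfe : f = s(u, v)
          · refine mem_tverts.mpr ⟨g, ?_, hxg⟩
            rw [hτ]
            exact Finset.mem_erase.mpr ⟨fun h => hfg (hfe.trans h.symm),
              by rw [hρ, List.mem_toFinset]; exact hg⟩
          · refine mem_tverts.mpr ⟨f, ?_, hxf⟩
            rw [hτ]
            exact Finset.mem_erase.mpr ⟨hfe, by rw [hρ, List.mem_toFinset]; exact hf⟩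
        have hu : u ∈ tverts τ := key u (by simp)
        have hv : v ∈ tverts τ := key v (by simp)
        have hτne : τ.Nonempty := by rw [← Finset.card_pos]; omega
        have hcnt := hcount τ hτσ hτne
        rw [contractVerts_eq] at hcnt
        have himg : (tverts τ).image (contractMap u v) ⊆ (tverts τ).erase v := by
          intro x hx
          obtain ⟨a, ha, rfl⟩ := Finset.mem_image.mp hx
          by_cases hav : a = v
          · rw [show contractMap u v a = u by rw [hav]; exact if_pos rfl]
            exact Finset.mem_erase.mpr ⟨huv.ne, hu⟩
          · rw [show contractMap u v a = a from if_neg hav]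
            exact Finset.mem_erase.mpr ⟨hav, ha⟩
        have h7 := Finset.card_le_card himg
        rw [Finset.card_erase_of_mem hv] at h7
        have h8 : (tverts τ).card ≤ c.support.toFinset.card :=
          Finset.card_le_card ((tverts_mono (Finset.erase_subset _ _)).trans htv)
        omega
      · have hρσ : ρ ⊆ σ := fun g hg =>
          (Finset.mem_insert.mp (hρsub g hg)).resolve_left (by rintro rfl; exact heρ hg)
        have hρne : ρ.Nonempty := by rw [← Finset.card_pos]; omega
        have hcnt := hcount ρ hρσ hρne
        rw [contractVerts_eq] at hcnt
        have h1 : ((tverts ρ).image (contractMap u v)).card ≤ (tverts ρ).card :=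
          Finset.card_image_le
        have h2 : (tverts ρ).card ≤ c.support.toFinset.card := Finset.card_le_card htv
        omega




lemma singleton_acyclic (f : Sym2 V) :
    (SimpleGraph.fromEdgeSet (({f} : Finset (Sym2 V)) : Set (Sym2 V))).IsAcyclic := by
  intro x c hc
  have h3 := hc.three_le_length
  have hcard : c.edges.toFinset.card = c.length := by
    rw [List.toFinset_card_of_nodup hc.isTrail.edges_nodup, Walk.length_edges]
  have hsub : c.edges.toFinset ⊆ {f} := by
    intro g hg
    rw [List.mem_toFinset] at hg
    have h6 := Walk.edges_subset_edgeSet c hg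
    rw [SimpleGraph.edgeSet_fromEdgeSet] at h6
    simpa using h6.1
  have := Finset.card_le_card hsub
  rw [hcard, Finset.card_singleton] at this
  omega

lemma exists_max_forest (G : SimpleGraph V) {u v : V} (huv : G.Adj u v) :
    ∃ τ : Finset (Sym2 V), (τ : Set (Sym2 V)) ⊆ G.edgeSet ∧ s(u, v) ∈ τ ∧
      (SimpleGraph.fromEdgeSet (τ : Set (Sym2 V))).IsAcyclic ∧
      τ.card = Fintype.card V - Nat.card G.ConnectedComponent := by
  classical
  set S : Finset (Finset (Sym2 V)) := G.edgeFinset.powerset.filter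
    (fun τ => s(u, v) ∈ τ ∧ (SimpleGraph.fromEdgeSet (τ : Set (Sym2 V))).IsAcyclic) with hS
  have hSne : S.Nonempty := by
    refine ⟨{s(u, v)}, ?_⟩
    rw [hS, Finset.mem_filter, Finset.mem_powerset]
    refine ⟨Finset.singleton_subset_iff.mpr (by rwa [SimpleGraph.mem_edgeFinset]), by simp,
      singleton_acyclic _⟩
  obtain ⟨τ, hτS, hτmax⟩ := S.exists_max_image (fun τ => τ.card) hSne
  rw [hS, Finset.mem_filter, Finset.mem_powerset] at hτS
  obtain ⟨hτE, hτe, hτac⟩ := hτS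
  have hτE' : (τ : Set (Sym2 V)) ⊆ G.edgeSet := by
    intro g hg
    rw [← SimpleGraph.coe_edgeFinset]
    exact_mod_cast hτE (by exact_mod_cast hg)
  set H : SimpleGraph V := SimpleGraph.fromEdgeSet (τ : Set (Sym2 V)) with hH
  have hHadjτ : ∀ {x y : V}, H.Adj x y → s(x, y) ∈ τ := by
    intro x y h
    rw [hH, SimpleGraph.fromEdgeSet_adj] at h
    exact_mod_cast h.1
  have hτadjH : ∀ {x y : V}, s(x, y) ∈ τ → x ≠ y → H.Adj x y := by
    intro x y h hne
    rw [hH, SimpleGraph.fromEdgeSet_adj]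
    exact ⟨by exact_mod_cast h, hne⟩
  -- maximality: every G-adjacency is H-reachable
  have hGH : ∀ {a b : V}, G.Adj a b → H.Reachable a b := by
    intro a b hab
    by_contra hnr
    have hfτ : s(a, b) ∉ τ := fun h => hnr (hτadjH h hab.ne).reachable
    set τ' := insert s(a, b) τ with hτ'
    have hacτ' : (SimpleGraph.fromEdgeSet (τ' : Set (Sym2 V))).IsAcyclic := by
      intro x c hc
      by_cases hfc : s(a, b) ∈ c.edges
      · have hreach : ((SimpleGraph.fromEdgeSet (τ' : Set (Sym2 V)) \ SimpleGraph.fromEdgeSet {s(a, b)})).Reachable a b := by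
          have h9 := (SimpleGraph.adj_and_reachable_delete_edges_iff_exists_cycle
            (G := SimpleGraph.fromEdgeSet (τ' : Set (Sym2 V)))).mpr ⟨x, c, hc, hfc⟩
          exact h9.2
        have hle : (SimpleGraph.fromEdgeSet (τ' : Set (Sym2 V)) \ SimpleGraph.fromEdgeSet {s(a, b)}) ≤ H := by
          intro x y hxy
          rw [SimpleGraph.sdiff_adj] at hxy
          obtain ⟨h1, h2⟩ := hxy
          rw [SimpleGraph.fromEdgeSet_adj] at h1
          rw [SimpleGraph.fromEdgeSet_adj] at h2
          have hne : x ≠ y := h1.2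
          have : s(x, y) ≠ s(a, b) := fun h => h2 ⟨by simp [h], hne⟩
          have hmem : s(x, y) ∈ τ := by
            have := h1.1
            rw [hτ'] at this
            rcases Finset.mem_insert.mp (by exact_mod_cast this) with h | h
            · exact absurd h ‹s(x, y) ≠ s(a, b)›
            · exact h
          exact hτadjH hmem hne
        exact hnr (hreach.mono hle)
      · have hsubH : ∀ g ∈ c.edges, g ∈ H.edgeSet := by
          intro g hg
          have h6 := Walk.edges_subset_edgeSet c hg
          rw [SimpleGraph.edgeSet_fromEdgeSet] at h6 ⊢
          refine ⟨?_, h6.2⟩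
          have h7 := h6.1
          rw [hτ'] at h7
          rcases Finset.mem_insert.mp (by exact_mod_cast h7) with h | h
          · exact absurd (h ▸ hg) hfc
          · exact_mod_cast h
        exact hτac (c.transfer H hsubH) (hc.transfer _)
    have hτ'S : τ' ∈ S := by
      rw [hS, Finset.mem_filter, Finset.mem_powerset]
      exact ⟨Finset.insert_subset (by rwa [SimpleGraph.mem_edgeFinset]) hτE,
        Finset.mem_insert_of_mem hτe, hacτ'⟩
    have := hτmax τ' hτ'S
    rw [hτ', Finset.card_insert_of_notMem hfτ] at this
    omega
  have hreach : ∀ {a b : V}, G.Reachable a b → H.Reachable a b := by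
    intro a b hr
    obtain ⟨p⟩ := hr
    induction p with
    | nil => exact Reachable.refl _
    | cons h q ih => exact (hGH h).trans ih
  -- counting
  refine ⟨τ, hτE', hτe, hτac, ?_⟩
  have hub := lemB G τ hτE' hτac
  -- lower bound via injection
  haveI : Fintype G.ConnectedComponent := Fintype.ofFinite _
  set rep : V → V := fun w => (G.connectedComponentMk w).out with hrep
  have hrepmk : ∀ w, G.connectedComponentMk (rep w) = G.connectedComponentMk w := by
    intro w
    exact (G.connectedComponentMk w).out_eq
  have hrepfix : ∀ w, rep (rep w) = rep w := by
    intro w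
    rw [hrep]
    simp only
    rw [hrepmk w]
  set F : Finset V := Finset.univ.filter (fun w => rep w = w) with hF
  have hFcard : F.card = Nat.card G.ConnectedComponent := by
    rw [Nat.card_eq_fintype_card, ← Finset.card_univ]
    apply Finset.card_bij (fun a _ => G.connectedComponentMk a)
    · intro a _; exact Finset.mem_univ _
    · intro a ha b hb hab
      rw [hF, Finset.mem_filter] at ha hb
      rw [← ha.2, ← hb.2, hrep]
      simp only
      rw [hab]
    · intro c _
      refine ⟨c.out, ?_, c.out_eq⟩
      rw [hF, Finset.mem_filter]
      refine ⟨Finset.mem_univ _, ?_⟩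
      show Quot.out (G.connectedComponentMk (Quot.out c)) = Quot.out c
      exact congrArg Quot.out c.out_eq
  set s : Finset V := Finset.univ.filter (fun w => ¬ (rep w = w)) with hs
  have hscard : s.card + F.card = Fintype.card V := by
    rw [hs, hF, ← Finset.card_univ]
    rw [add_comm]
    exact Finset.card_filter_add_card_filter_not _
  -- each non-representative has an edge toward its representative
  have hex : ∀ w ∈ s, ∃ y : V, s(w, y) ∈ τ ∧
      H.dist y (rep w) < H.dist w (rep w) := by
    intro w hw
    rw [hs, Finset.mem_filter] at hw
    have hwne : w ≠ rep w := fun h => hw.2 h.symm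
    have hGr : G.Reachable w (rep w) := by
      rw [← SimpleGraph.ConnectedComponent.eq, hrepmk]
    have hr : H.Reachable w (rep w) := hreach hGr
    obtain ⟨p, hp⟩ := hr.exists_walk_length_eq_dist
    have hd0 : 0 < H.dist w (rep w) := hr.pos_dist_of_ne hwne
    have hnn : ¬ p.Nil := by rw [Walk.nil_iff_length_eq]; omega
    obtain ⟨y, hy, q, hq⟩ := Walk.not_nil_iff.mp hnn
    refine ⟨y, hHadjτ hy, ?_⟩
    have hql : q.length + 1 = H.dist w (rep w) := by rw [← hp, hq, Walk.length_cons]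
    have h1 : H.dist y (rep w) ≤ q.length := SimpleGraph.dist_le q
    omega
  set ι : V → Sym2 V := fun w => if h : w ∈ s then s(w, (hex w h).choose) else s(w, w) with hι
  have hcard2 : s.card ≤ τ.card := by
    apply Finset.card_le_card_of_injOn ι
    · intro w hw
      rw [hι]
      simp only [dif_pos (show w ∈ s from hw)]
      exact ((hex w hw).choose_spec).1
    · intro w hw w' hw' heq
      have hw2 : w ∈ s := hw
      have hw2' : w' ∈ s := hw'
      rw [hι] at heq
      simp only [dif_pos hw2, dif_pos hw2'] at heq
      obtain ⟨hyτ, hyd⟩ := (hex w hw2).choose_spec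
      obtain ⟨hyτ', hyd'⟩ := (hex w' hw2').choose_spec
      rcases Sym2.eq_iff.mp heq with ⟨h1, _⟩ | ⟨h1, h2⟩
      · exact h1
      · exfalso
        have hGadj : G.Adj w (hex w hw2).choose := by
          rw [← SimpleGraph.mem_edgeSet]
          exact hτE' (by exact_mod_cast hyτ)
        have hcomp : rep w = rep w' := by
          have hmk : G.connectedComponentMk w = G.connectedComponentMk w' := by
            rw [← h2]
            exact (SimpleGraph.ConnectedComponent.eq.mpr hGadj.reachable)
          rw [hrep]
          simp only
          rw [hmk]
        rw [h2] at hyd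
        rw [← h1, ← hcomp] at hyd'
        omega
  omega


end FCAux

open FCAux in
/-- The link of the vertex `e = s(u,v)` in the forest complex `F(G)` is isomorphic to
the forest complex `F(G/e)` of the contracted graph, and
`dim F(G/e) = dim F(G) - 1 = |V| - c - 2`. -/
theorem forest_complex_link_contraction {V : Type*} [Fintype V] [DecidableEq V]
    (G : SimpleGraph V) (u v : V) (huv : G.Adj u v) :
    (∃ e : {σ : Finset (Sym2 V) // s(u, v) ∉ σ ∧ ForestFace G (insert s(u, v) σ) ∧
            σ.Nonempty} ≃
          {σ : Finset (Sym2 V) // ContractedForestFace G u v σ},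
        ∀ a b, a.1 ⊆ b.1 ↔ (e a).1 ⊆ (e b).1) ∧
      (∀ σ, ContractedForestFace G u v σ →
        σ.card + 1 ≤ Fintype.card V - Nat.card G.ConnectedComponent) ∧
      (2 ≤ Fintype.card V - Nat.card G.ConnectedComponent →
        ∃ σ, ContractedForestFace G u v σ ∧
          σ.card + 1 = Fintype.card V - Nat.card G.ConnectedComponent) := by
  have hiff : ∀ σ : Finset (Sym2 V),
      (s(u, v) ∉ σ ∧ ForestFace G (insert s(u, v) σ) ∧ σ.Nonempty) ↔
        ContractedForestFace G u v σ := by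
    intro σ
    constructor
    · rintro ⟨he, hF, hne⟩
      exact (bridge G huv σ he).mp ⟨hF, hne⟩
    · intro hC
      have he := hC.2.2.1
      obtain ⟨hF, hne⟩ := (bridge G huv σ he).mpr hC
      exact ⟨he, hF, hne⟩
  refine ⟨⟨⟨fun a => ⟨a.1, (hiff a.1).mp a.2⟩, fun b => ⟨b.1, (hiff b.1).mpr b.2⟩,
      fun a => Subtype.ext rfl, fun b => Subtype.ext rfl⟩, fun a b => Iff.rfl⟩, ?_, ?_⟩
  · intro σ hC
    have he := hC.2.2.1
    obtain ⟨⟨-, hsub, hac⟩, -⟩ := (bridge G huv σ he).mpr hC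
    have hB := lemB G (insert s(u, v) σ) hsub hac
    rw [Finset.card_insert_of_notMem he] at hB
    omega
  · intro h2
    obtain ⟨τ, hsub, hτe, hac, hcard⟩ := exists_max_forest G huv
    refine ⟨τ.erase s(u, v), ?_, ?_⟩
    · apply (hiff _).mp
      refine ⟨Finset.notMem_erase _ _, ?_, ?_⟩
      · rw [Finset.insert_erase hτe]
        exact ⟨⟨s(u, v), hτe⟩, hsub, hac⟩
      · rw [← Finset.card_pos, Finset.card_erase_of_mem hτe]
        omega
    · rw [Finset.card_erase_of_mem hτe]
      omega
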